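/- Let c be a normalized job-scheduling instance with m machines and n jobs, and let A be an allocation that minimizes the makespan and, among all allocations whose makespan is at most the makespan of A, minimizes the total cost Σ_{i ∈ Fin m} c_i(A_i). Then A is mean-efficient, i.e., Σ_{i ∈ Fin m} c_i(A_i) ≤ (1/m)·Σ_{i ∈ Fin m} c_i([n]). -/

import Mathlib

open Finset

noncomputable section

/-- The cost to machine `i` of the bundle of jobs assigned to machine `k` under allocation `A`. -/
def bundleCost {m n : ℕ} (c : Fin m → Fin n → ℝ) (A : Fin n → Fin m) (i k : Fin m) : ℝ :=
  ∑ j ∈ Finset.univ.filter (fun j => A j = k), c i j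

/-- The total cost to machine `i` of all jobs, `c_i([n])`. -/
def rowSum {m n : ℕ} (c : Fin m → Fin n → ℝ) (i : Fin m) : ℝ :=
  ∑ j, c i j

/-- The makespan of allocation `A`: the maximum cost of any machine. -/
def makespan {m n : ℕ} (hm : 0 < m) (c : Fin m → Fin n → ℝ) (A : Fin n → Fin m) : ℝ :=
  (Finset.univ : Finset (Fin m)).sup' ⟨⟨0, hm⟩, Finset.mem_univ _⟩ fun i => bundleCost c A i i

/-- The optimal (minimum) makespan over all allocations. -/
def OPT {m n : ℕ} (hm : 0 < m) (c : Fin m → Fin n → ℝ) : ℝ :=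
  (Finset.univ : Finset (Fin n → Fin m)).inf' ⟨fun _ => ⟨0, hm⟩, Finset.mem_univ _⟩
    fun X => makespan hm c X

-- auxiliary: every self-map of a finite nonempty type has a periodic point
lemma exists_periodic_pt {α : Type*} [Finite α] [Nonempty α] (f : α → α) :
    ∃ p r, 0 < r ∧ f^[r] p = p := by
  obtain ⟨x⟩ := (inferInstance : Nonempty α)
  obtain ⟨a, b, hab, heq⟩ := Finite.exists_ne_map_eq_of_infinite (fun a : ℕ => f^[a] x)
  have key : ∀ a b : ℕ, a < b → f^[a] x = f^[b] x → ∃ p r, 0 < r ∧ f^[r] p = p := by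
    intro a b h he
    refine ⟨f^[a] x, b - a, by omega, ?_⟩
    rw [← Function.iterate_add_apply, Nat.sub_add_cancel h.le]
    exact he.symm
  rcases hab.lt_or_gt with h | h
  · exact key a b h heq
  · exact key b a h heq.symm


/-- For normalized instances, a makespan-minimizing allocation of minimum total cost is
mean-efficient. -/
theorem stmt_9 {m n : ℕ} (hm : 2 ≤ m) (hn : 2 ≤ n)
    (c : Fin m → Fin n → ℝ) (hc : ∀ i j, 0 ≤ c i j)
    (C : ℝ) (hnorm : ∀ i : Fin m, rowSum c i = C) (A : Fin n → Fin m)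
    (hopt : ∀ X : Fin n → Fin m, makespan (by omega) c A ≤ makespan (by omega) c X)
    (hmin : ∀ X : Fin n → Fin m, makespan (by omega) c X ≤ makespan (by omega) c A →
      ∑ i : Fin m, bundleCost c A i i ≤ ∑ i : Fin m, bundleCost c X i i) :
    ∑ i : Fin m, bundleCost c A i i ≤ (1 / (m : ℝ)) * ∑ i : Fin m, rowSum c i := by
  have hm0 : 0 < m := by omega
  have hrow : ∀ i : Fin m, ∑ k : Fin m, bundleCost c A i k = C := by
    intro i
    rw [← hnorm i]
    exact Finset.sum_fiberwise Finset.univ A (c i)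
  have hRHS : (1 / (m : ℝ)) * ∑ i : Fin m, rowSum c i = C := by
    have h1 : ∑ i : Fin m, rowSum c i = (m : ℝ) * C := by
      simp [hnorm, Finset.sum_const, Finset.card_univ, mul_comm]
    have hm' : (m : ℝ) ≠ 0 := by positivity
    rw [h1]; field_simp
  rw [hRHS]
  by_contra hlt
  push_neg at hlt
  -- for every machine i there is a bundle k that i values below its owner's value
  have hex : ∀ i : Fin m, ∃ k, bundleCost c A i k < bundleCost c A k k := by
    intro i
    have : ∑ k : Fin m, bundleCost c A i k < ∑ k : Fin m, bundleCost c A k k := by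
      rw [hrow i]; exact hlt
    obtain ⟨k, _, hk⟩ := Finset.exists_lt_of_sum_lt this
    exact ⟨k, hk⟩
  choose f hf using hex
  -- find a periodic point of f and its minimal period
  have : Nonempty (Fin m) := ⟨⟨0, hm0⟩⟩
  obtain ⟨p, r, hr, hfr⟩ := exists_periodic_pt f
  have hP : ∃ s, 0 < s ∧ f^[s] p = p := ⟨r, hr, hfr⟩
  set r' := Nat.find hP with hr'def
  obtain ⟨hr'pos, hr'per⟩ := Nat.find_spec hP
  have hminper : ∀ s, 0 < s → s < r' → f^[s] p ≠ p := fun s hs hlt' hcon =>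
    Nat.find_min hP hlt' ⟨hs, hcon⟩
  -- the cycle as a list
  set l : List (Fin m) := (List.range r').map (fun t => f^[t] p) with hl
  have hlen : l.length = r' := by simp [hl]
  have hgetl : ∀ s (hs : s < r'), l[s]'(by omega) = f^[s] p := by
    intro s hs; simp [hl]
  have hinj : ∀ s, s < r' → ∀ t, t < r' → f^[s] p = f^[t] p → s = t := by
    intro s hs t ht h
    by_contra hne
    wlog hlt' : s < t generalizing s t
    · exact this t ht s hs h.symm (Ne.symm hne) (by omega)
    have hkey : f^[r' - t + s] p = p := by
      have h2 := congrArg (f^[r' - t]) h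
      rw [← Function.iterate_add_apply, ← Function.iterate_add_apply] at h2
      rw [show r' - t + t = r' from by omega] at h2
      rw [h2, hr'per]
    exact hminper _ (by omega) (by omega) hkey
  have hnodup : l.Nodup := by
    rw [hl, List.nodup_map_iff_inj_on List.nodup_range]
    intro s hs t ht h
    exact hinj s (List.mem_range.mp hs) t (List.mem_range.mp ht) h
  have hmeml : ∀ x, x ∈ l ↔ ∃ t, t < r' ∧ f^[t] p = x := by
    intro x
    simp only [hl, List.mem_map, List.mem_range]
  -- f^[t+1] p is f^[(t+1) % r'] p
  have hmod : ∀ t, t < r' → f^[t + 1] p = f^[(t + 1) % r'] p := by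
    intro t ht
    rcases Nat.lt_or_ge (t + 1) r' with h | h
    · rw [Nat.mod_eq_of_lt h]
    · have he : t + 1 = r' := by omega
      rw [he, Nat.mod_self, Function.iterate_zero_apply, hr'per]
  set σ := l.formPerm with hσdef
  -- on the cycle, σ = f
  have hσf : ∀ x, x ∈ l → σ x = f x := by
    intro x hx
    obtain ⟨t, ht, rfl⟩ := (hmeml x).mp hx
    have h1 : σ (l[t]'(by omega)) = l[(t + 1) % l.length]'(Nat.mod_lt _ (by omega)) :=
      List.formPerm_apply_getElem l hnodup t (by omega)
    rw [hgetl t ht] at h1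
    rw [h1]
    have h2 : (t + 1) % l.length = (t + 1) % r' := by rw [hlen]
    have h3 : (t + 1) % r' < r' := Nat.mod_lt _ (by omega)
    calc (l[(t + 1) % l.length]'(Nat.mod_lt _ (by omega)))
        = l[(t + 1) % r']'(by omega) := by congr 1
      _ = f^[(t + 1) % r'] p := hgetl _ h3
      _ = f^[t + 1] p := (hmod t ht).symm
      _ = f (f^[t] p) := Function.iterate_succ_apply' f t p
  have hσid : ∀ x, x ∉ l → σ x = x := fun x hx => List.formPerm_apply_of_notMem hx
  -- f maps the cycle into itself
  have hfmem : ∀ x, x ∈ l → f x ∈ l := by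
    intro x hx
    rw [← hσf x hx]
    exact List.formPerm_apply_mem_of_mem hx
  -- the improved allocation
  set X : Fin n → Fin m := fun j => σ.symm (A j) with hXdef
  have hXbundle : ∀ i : Fin m, bundleCost c X i i = bundleCost c A i (σ i) := by
    intro i
    unfold bundleCost
    apply Finset.sum_congr _ (fun _ _ => rfl)
    apply Finset.filter_congr
    intro j _
    simp only [hXdef, Equiv.symm_apply_eq, eq_iff_iff]
  have hDle : ∀ i : Fin m, bundleCost c A i i ≤ makespan hm0 c A := by
    intro i
    exact Finset.le_sup' (fun i => bundleCost c A i i) (Finset.mem_univ i)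
  have hmak : makespan hm0 c X ≤ makespan hm0 c A := by
    apply Finset.sup'_le
    intro i _
    rw [hXbundle i]
    by_cases hi : i ∈ l
    · rw [hσf i hi]
      exact (hf i).le.trans (hDle (f i))
    · rw [hσid i hi]
      exact hDle i
  -- total cost strictly decreases
  set L : Finset (Fin m) := l.toFinset with hLdef
  have hLmem : ∀ x, x ∈ L ↔ x ∈ l := by intro x; simp [hLdef]
  have hLne : L.Nonempty := ⟨p, by
    rw [hLmem]; rw [hmeml]; exact ⟨0, hr'pos, rfl⟩⟩
  have himage : L.image σ = L := by
    apply Finset.eq_of_subset_of_card_le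
    · intro x hx
      obtain ⟨y, hy, rfl⟩ := Finset.mem_image.mp hx
      rw [hLmem] at hy ⊢
      rw [hσf y hy]
      exact hfmem y hy
    · rw [Finset.card_image_of_injective _ σ.injective]
  have hsum1 : ∑ i ∈ L, bundleCost c A (σ i) (σ i) = ∑ i ∈ L, bundleCost c A i i := by
    have h4 := Finset.sum_image (s := L) (g := σ) (f := fun k => bundleCost c A k k)
      (fun x _ y _ h => σ.injective h)
    rw [himage] at h4
    exact h4.symm
  have hstrict : ∑ i : Fin m, bundleCost c A i (σ i) < ∑ i : Fin m, bundleCost c A i i := by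
    rw [← Finset.sum_add_sum_compl L (fun i => bundleCost c A i (σ i)),
        ← Finset.sum_add_sum_compl L (fun i => bundleCost c A i i)]
    have h1 : ∑ i ∈ Lᶜ, bundleCost c A i (σ i) = ∑ i ∈ Lᶜ, bundleCost c A i i := by
      apply Finset.sum_congr rfl
      intro i hi
      rw [Finset.mem_compl, hLmem] at hi
      rw [hσid i hi]
    rw [h1]
    refine add_lt_add_of_lt_of_le ?_ le_rfl
    calc ∑ i ∈ L, bundleCost c A i (σ i)
        < ∑ i ∈ L, bundleCost c A (σ i) (σ i) := by
          apply Finset.sum_lt_sum_of_nonempty hLne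
          intro i hi
          rw [hLmem] at hi
          rw [hσf i hi]
          exact hf i
      _ = ∑ i ∈ L, bundleCost c A i i := hsum1
  have hcontra := hmin X hmak
  have hXsum : ∑ i : Fin m, bundleCost c X i i = ∑ i : Fin m, bundleCost c A i (σ i) :=
    Finset.sum_congr rfl (fun i _ => hXbundle i)
  rw [hXsum] at hcontra
  linarith
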